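/- arXiv:2001.09756 — 9 statements merged into one kernel-verified Lean document; each statement's English description precedes it below -/
import Mathlib

section
/- For any real numbers θ₂, θ₃, θ₄, the quantity s̄₁ = -cos(2(θ₂+θ₃+θ₄)) + cos(2θ₂) + cos(2θ₃) + cos(2θ₄) satisfies -2√2 ≤ s̄₁ ≤ 2√2. -/
lemma abs_cos_add_abs_sin_le_sqrt_two (x : ℝ) :
    |Real.cos x| + |Real.sin x| ≤ Real.sqrt 2 := by
  have h := Real.sin_sq_add_cos_sq x
  have h2 : (0:ℝ) ≤ 2 := by norm_num
  rw [show Real.sqrt 2 = Real.sqrt 2 from rfl]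
  have hnn : 0 ≤ |Real.cos x| + |Real.sin x| := by positivity
  have hsq : (|Real.cos x| + |Real.sin x|)^2 ≤ 2 := by
    have := sq_abs (Real.cos x)
    have := sq_abs (Real.sin x)
    nlinarith [sq_nonneg (|Real.cos x| - |Real.sin x|)]
  calc |Real.cos x| + |Real.sin x| = Real.sqrt ((|Real.cos x| + |Real.sin x|)^2) :=
        (Real.sqrt_sq hnn).symm
    _ ≤ Real.sqrt 2 := Real.sqrt_le_sqrt hsq

theorem qm_s_function_tsirelson_bounds (θ₂ θ₃ θ₄ : ℝ) :
    -(2 * Real.sqrt 2) ≤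
      -Real.cos (2 * (θ₂ + θ₃ + θ₄)) + Real.cos (2 * θ₂) + Real.cos (2 * θ₃)
        + Real.cos (2 * θ₄) ∧
    -Real.cos (2 * (θ₂ + θ₃ + θ₄)) + Real.cos (2 * θ₂) + Real.cos (2 * θ₃)
        + Real.cos (2 * θ₄) ≤ 2 * Real.sqrt 2 := by
  have h1 := Real.cos_add_cos (2*θ₂) (2*θ₃)
  have h2 := Real.cos_sub_cos (2*θ₄) (2*(θ₂+θ₃+θ₄))
  have e1 : (2*θ₂ + 2*θ₃)/2 = θ₂ + θ₃ := by ring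
  have e2 : (2*θ₂ - 2*θ₃)/2 = θ₂ - θ₃ := by ring
  have e3 : (2*θ₄ + 2*(θ₂+θ₃+θ₄))/2 = θ₂+θ₃+2*θ₄ := by ring
  have e4 : (2*θ₄ - 2*(θ₂+θ₃+θ₄))/2 = -(θ₂+θ₃) := by ring
  rw [e1, e2] at h1
  rw [e3, e4, Real.sin_neg] at h2
  set S := -Real.cos (2 * (θ₂ + θ₃ + θ₄)) + Real.cos (2 * θ₂) + Real.cos (2 * θ₃)
        + Real.cos (2 * θ₄) with hS
  have key : S = 2 * Real.cos (θ₂+θ₃) * Real.cos (θ₂-θ₃)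
      + 2 * Real.sin (θ₂+θ₃+2*θ₄) * Real.sin (θ₂+θ₃) := by
    rw [hS]; linarith [h1, h2]
  have hb := abs_cos_add_abs_sin_le_sqrt_two (θ₂+θ₃)
  have hc1 : |Real.cos (θ₂-θ₃)| ≤ 1 := Real.abs_cos_le_one _
  have hc2 : |Real.sin (θ₂+θ₃+2*θ₄)| ≤ 1 := Real.abs_sin_le_one _
  have habs : |S| ≤ 2 * Real.sqrt 2 := by
    rw [key]
    calc |2 * Real.cos (θ₂+θ₃) * Real.cos (θ₂-θ₃)
      + 2 * Real.sin (θ₂+θ₃+2*θ₄) * Real.sin (θ₂+θ₃)|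
        ≤ |2 * Real.cos (θ₂+θ₃) * Real.cos (θ₂-θ₃)|
          + |2 * Real.sin (θ₂+θ₃+2*θ₄) * Real.sin (θ₂+θ₃)| := abs_add_le _ _
      _ = 2 * |Real.cos (θ₂+θ₃)| * |Real.cos (θ₂-θ₃)|
          + 2 * |Real.sin (θ₂+θ₃+2*θ₄)| * |Real.sin (θ₂+θ₃)| := by
            rw [abs_mul, abs_mul, abs_mul, abs_mul]
            norm_num
      _ ≤ 2 * |Real.cos (θ₂+θ₃)| + 2 * |Real.sin (θ₂+θ₃)| := by
            nlinarith [abs_nonneg (Real.cos (θ₂+θ₃)), abs_nonneg (Real.sin (θ₂+θ₃))]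
      _ ≤ 2 * Real.sqrt 2 := by linarith
  constructor
  · linarith [neg_abs_le S]
  · linarith [le_abs_self S]
end

section
/- The maximum of the function f(θ₂, θ₃, θ₄) = -cos(2(θ₂+θ₃+θ₄)) + cos(2θ₂) + cos(2θ₃) + cos(2θ₄) over all reals is exactly 2√2, attained at θ₂ = θ₃ = θ₄ = π/8. -/
open Real

lemma val_at_pi8 :
    -Real.cos (2 * (Real.pi / 8 + Real.pi / 8 + Real.pi / 8))
        + Real.cos (2 * (Real.pi / 8)) + Real.cos (2 * (Real.pi / 8))
        + Real.cos (2 * (Real.pi / 8)) = 2 * Real.sqrt 2 := by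
  rw [show (2:ℝ) * (Real.pi / 8 + Real.pi / 8 + Real.pi / 8) = Real.pi - Real.pi/4 by ring,
      show (2:ℝ) * (Real.pi / 8) = Real.pi/4 by ring,
      Real.cos_pi_sub, Real.cos_pi_div_four]
  ring

lemma abs_sin_add_abs_cos_le (u : ℝ) : |Real.sin u| + |Real.cos u| ≤ Real.sqrt 2 := by
  have h1 : Real.sin u ^ 2 + Real.cos u ^ 2 = 1 := Real.sin_sq_add_cos_sq u
  have h2 : (0:ℝ) ≤ |Real.sin u| + |Real.cos u| := by positivity
  have h3 : (|Real.sin u| + |Real.cos u|) ^ 2 ≤ 2 := by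
    nlinarith [sq_nonneg (|Real.sin u| - |Real.cos u|), sq_abs (Real.sin u),
      sq_abs (Real.cos u)]
  calc |Real.sin u| + |Real.cos u| = Real.sqrt ((|Real.sin u| + |Real.cos u|) ^ 2) :=
        (Real.sqrt_sq h2).symm
    _ ≤ Real.sqrt 2 := Real.sqrt_le_sqrt h3

lemma upper_bound (θ₂ θ₃ θ₄ : ℝ) :
    -Real.cos (2 * (θ₂ + θ₃ + θ₄)) + Real.cos (2 * θ₂)
      + Real.cos (2 * θ₃) + Real.cos (2 * θ₄) ≤ 2 * Real.sqrt 2 := by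
  have hbc := Real.cos_add_cos (2*θ₃) (2*θ₄)
  rw [show (2*θ₃ + 2*θ₄)/2 = θ₃ + θ₄ by ring, show (2*θ₃ - 2*θ₄)/2 = θ₃ - θ₄ by ring] at hbc
  have ha := Real.cos_sub_cos (2*θ₂) (2*(θ₂+θ₃+θ₄))
  rw [show (2*θ₂ + 2*(θ₂+θ₃+θ₄))/2 = 2*θ₂ + θ₃ + θ₄ by ring,
      show (2*θ₂ - 2*(θ₂+θ₃+θ₄))/2 = -(θ₃ + θ₄) by ring, Real.sin_neg] at ha
  set u := θ₃ + θ₄ with hu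
  have key : -Real.cos (2 * (θ₂ + θ₃ + θ₄)) + Real.cos (2 * θ₂)
      + Real.cos (2 * θ₃) + Real.cos (2 * θ₄)
      = 2 * Real.sin (2*θ₂ + θ₃ + θ₄) * Real.sin u
        + 2 * Real.cos u * Real.cos (θ₃ - θ₄) := by
    nlinarith [hbc, ha]
  rw [key]
  have h1 : Real.sin (2*θ₂ + θ₃ + θ₄) * Real.sin u ≤ |Real.sin u| := by
    calc Real.sin (2*θ₂ + θ₃ + θ₄) * Real.sin u ≤ |Real.sin (2*θ₂ + θ₃ + θ₄) * Real.sin u| :=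
          le_abs_self _
      _ = |Real.sin (2*θ₂ + θ₃ + θ₄)| * |Real.sin u| := abs_mul _ _
      _ ≤ 1 * |Real.sin u| := mul_le_mul_of_nonneg_right (Real.abs_sin_le_one _) (abs_nonneg _)
      _ = |Real.sin u| := one_mul _
  have h2 : Real.cos u * Real.cos (θ₃ - θ₄) ≤ |Real.cos u| := by
    calc Real.cos u * Real.cos (θ₃ - θ₄) ≤ |Real.cos u * Real.cos (θ₃ - θ₄)| := le_abs_self _
      _ = |Real.cos u| * |Real.cos (θ₃ - θ₄)| := abs_mul _ _
      _ ≤ |Real.cos u| * 1 := mul_le_mul_of_nonneg_left (Real.abs_cos_le_one _) (abs_nonneg _)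
      _ = |Real.cos u| := mul_one _
  have h3 := abs_sin_add_abs_cos_le u
  linarith

theorem qm_s_function_max_is_tsirelson :
    IsGreatest
      {v : ℝ | ∃ θ₂ θ₃ θ₄ : ℝ,
        v = -Real.cos (2 * (θ₂ + θ₃ + θ₄)) + Real.cos (2 * θ₂)
            + Real.cos (2 * θ₃) + Real.cos (2 * θ₄)}
      (2 * Real.sqrt 2) ∧
    -Real.cos (2 * (Real.pi / 8 + Real.pi / 8 + Real.pi / 8))
        + Real.cos (2 * (Real.pi / 8)) + Real.cos (2 * (Real.pi / 8))
        + Real.cos (2 * (Real.pi / 8)) = 2 * Real.sqrt 2 := by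
  refine ⟨⟨⟨Real.pi/8, Real.pi/8, Real.pi/8, val_at_pi8.symm⟩, ?_⟩, val_at_pi8⟩
  rintro v ⟨θ₂, θ₃, θ₄, rfl⟩
  exact upper_bound θ₂ θ₃ θ₄
end

section
/- There is no triple of reals θ₂, θ₃, θ₄ such that -cos(2(θ₂+θ₃+θ₄)) + cos(2θ₂) + cos(2θ₃) + cos(2θ₄) > 2√2; equivalently, the CHSH-maximal value 4 is unattainable under the constraint θ₁ = θ₂ + θ₃ + θ₄. -/
/-!
With `s = θ₂ + θ₃`, sum-to-product turns the s-function into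
`2 (cos s · cos (θ₂ - θ₃) + sin s · sin (s + 2θ₄))`, which is at most
`2 (|cos s| + |sin s|) ≤ 2√2`.
-/

open Real

lemma mul_le_abs_of_abs_le_one {α : Type*} [Ring α] [LinearOrder α] [IsOrderedRing α]
    (a : α) {b : α} (hb : |b| ≤ 1) : a * b ≤ |a| :=
  calc a * b ≤ |a * b| := le_abs_self _
    _ = |a| * |b| := abs_mul a b
    _ ≤ |a| := mul_le_of_le_one_right (abs_nonneg a) hb

lemma abs_cos_add_abs_sin_le_sqrt_two_s4 (x : ℝ) : |cos x| + |sin x| ≤ √2 := by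
  apply le_sqrt_of_sq_le
  nlinarith [sin_sq_add_cos_sq x, sq_abs (cos x), sq_abs (sin x),
    sq_nonneg (|cos x| - |sin x|)]

lemma neg_cos_add_cos_add_cos_add_cos_eq (a b c : ℝ) :
    -cos (2 * (a + b + c)) + cos (2 * a) + cos (2 * b) + cos (2 * c)
      = 2 * (cos (a + b) * cos (a - b) + sin (a + b) * sin (a + b + 2 * c)) := by
  have hab : cos (2 * a) + cos (2 * b) = 2 * cos (a + b) * cos (a - b) := by
    rw [cos_add_cos]; ring_nf
  have hc : cos (2 * c) - cos (2 * (a + b + c)) = 2 * sin (a + b + 2 * c) * sin (a + b) := by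
    rw [cos_sub_cos, show (2 * c - 2 * (a + b + c)) / 2 = -(a + b) by ring, sin_neg]
    ring_nf
  linear_combination hab + hc

theorem qm_s_function_cannot_exceed_tsirelson :
    ¬ ∃ θ₂ θ₃ θ₄ : ℝ,
        2 * Real.sqrt 2 <
          -Real.cos (2 * (θ₂ + θ₃ + θ₄)) + Real.cos (2 * θ₂)
            + Real.cos (2 * θ₃) + Real.cos (2 * θ₄) := by
  rintro ⟨θ₂, θ₃, θ₄, h⟩
  rw [neg_cos_add_cos_add_cos_add_cos_eq] at h
  have hcos := mul_le_abs_of_abs_le_one (cos (θ₂ + θ₃)) (abs_cos_le_one (θ₂ - θ₃))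
  have hsin := mul_le_abs_of_abs_le_one (sin (θ₂ + θ₃)) (abs_sin_le_one (θ₂ + θ₃ + 2 * θ₄))
  linarith [abs_cos_add_abs_sin_le_sqrt_two_s4 (θ₂ + θ₃)]
end

section
/- Suppose α₁, α₂, α₃, α₄ and β₁, β₂, β₃, β₄ are nonnegative reals with α₁+α₃ = α₂+α₄ = β₁+β₃ = β₂+β₄ = 1. Then there exists a probability mass function ρ = (ρ₁,...,ρ₁₆) with ρₖ ≥ 0 summing to 1, given by products ρ indexed by (i,j,k,l) ∈ {1,3}×{2,4}×{1,3}×{2,4} via ρ_{ijkl} = αᵢ αⱼ βₖ βₗ, such that the Bell local conditional probabilities (products αᵢβⱼ) equal the corresponding Bell real conditional probabilities (sums of four ρ's). In particular every Bell local model instance is a Bell real model instance. -/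
theorem bell_local_is_bell_real
    (α₁ α₂ α₃ α₄ β₁ β₂ β₃ β₄ : ℝ)
    (hα₁ : 0 ≤ α₁) (hα₂ : 0 ≤ α₂) (hα₃ : 0 ≤ α₃) (hα₄ : 0 ≤ α₄)
    (hβ₁ : 0 ≤ β₁) (hβ₂ : 0 ≤ β₂) (hβ₃ : 0 ≤ β₃) (hβ₄ : 0 ≤ β₄)
    (hA : α₁ + α₃ = 1) (hA' : α₂ + α₄ = 1)
    (hB : β₁ + β₃ = 1) (hB' : β₂ + β₄ = 1) :
    ∃ ρ : Fin 2 → Fin 2 → Fin 2 → Fin 2 → ℝ,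
      -- ρ is given by the products ρ_{ijkl} = αᵢ αⱼ βₖ βₗ
      (∀ a₁ a₂ b₁ b₂ : Fin 2,
        ρ a₁ a₂ b₁ b₂ =
          (if a₁ = 0 then α₁ else α₃) * (if a₂ = 0 then α₂ else α₄) *
          (if b₁ = 0 then β₁ else β₃) * (if b₂ = 0 then β₂ else β₄)) ∧
      -- ρ is a probability mass function
      (∀ a₁ a₂ b₁ b₂ : Fin 2, 0 ≤ ρ a₁ a₂ b₁ b₂) ∧
      (∑ a₁ : Fin 2, ∑ a₂ : Fin 2, ∑ b₁ : Fin 2, ∑ b₂ : Fin 2, ρ a₁ a₂ b₁ b₂ = 1) ∧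
      -- the Bell local conditional probabilities equal the Bell real ones
      (∀ s t u v : Fin 2,
        ((if u = 0 then (if s = 0 then α₁ else α₃) else (if s = 0 then α₂ else α₄)) *
         (if v = 0 then (if t = 0 then β₁ else β₃) else (if t = 0 then β₂ else β₄))) =
        ∑ a₁ : Fin 2, ∑ a₂ : Fin 2, ∑ b₁ : Fin 2, ∑ b₂ : Fin 2,
          (if (if u = 0 then a₁ else a₂) = s ∧ (if v = 0 then b₁ else b₂) = t
            then ρ a₁ a₂ b₁ b₂ else 0)) := by
  have e1 : α₃ = 1 - α₁ := by linarith
  have e2 : α₄ = 1 - α₂ := by linarith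
  have e3 : β₃ = 1 - β₁ := by linarith
  have e4 : β₄ = 1 - β₂ := by linarith
  subst e1 e2 e3 e4
  refine ⟨fun a₁ a₂ b₁ b₂ =>
      (if a₁ = 0 then α₁ else 1 - α₁) * (if a₂ = 0 then α₂ else 1 - α₂) *
      (if b₁ = 0 then β₁ else 1 - β₁) * (if b₂ = 0 then β₂ else 1 - β₂),
    fun _ _ _ _ => rfl, ?_, ?_, ?_⟩
  · intro a₁ a₂ b₁ b₂
    apply mul_nonneg; apply mul_nonneg; apply mul_nonneg
    all_goals split <;> assumption
  · simp [Fin.sum_univ_two]; ring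
  · intro s t u v
    fin_cases s <;> fin_cases t <;> fin_cases u <;> fin_cases v <;>
      simp [Fin.sum_univ_two] <;> ring
end

section
/- For all nonnegative reals α₁, α₂, α₃, α₄, β₁, β₂, β₃, β₄ with α₁+α₃ = α₂+α₄ = β₁+β₃ = β₂+β₄ = 1, the correlation vector ((α₁-α₃)(β₁-β₃), (α₁-α₃)(β₂-β₄), (α₂-α₄)(β₁-β₃), (α₂-α₄)(β₂-β₄)) is never equal to (0, 1, -1, 0). Hence there exists a Bell real model instance whose correlations cannot be achieved by any Bell local model instance. -/
theorem bell_real_correlations_not_bell_local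
    (α₁ α₂ α₃ α₄ β₁ β₂ β₃ β₄ : ℝ)
    (hα₁ : 0 ≤ α₁) (hα₂ : 0 ≤ α₂) (hα₃ : 0 ≤ α₃) (hα₄ : 0 ≤ α₄)
    (hβ₁ : 0 ≤ β₁) (hβ₂ : 0 ≤ β₂) (hβ₃ : 0 ≤ β₃) (hβ₄ : 0 ≤ β₄)
    (hA : α₁ + α₃ = 1) (hA' : α₂ + α₄ = 1)
    (hB : β₁ + β₃ = 1) (hB' : β₂ + β₄ = 1) :
    ¬ ((α₁ - α₃) * (β₁ - β₃) = 0 ∧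
       (α₁ - α₃) * (β₂ - β₄) = 1 ∧
       (α₂ - α₄) * (β₁ - β₃) = -1 ∧
       (α₂ - α₄) * (β₂ - β₄) = 0) := by
  rintro ⟨h1, h2, h3, h4⟩
  have : ((α₁ - α₃) * (β₂ - β₄)) * ((α₂ - α₄) * (β₁ - β₃)) =
      ((α₁ - α₃) * (β₁ - β₃)) * ((α₂ - α₄) * (β₂ - β₄)) := by ring
  rw [h1, h2, h3, h4] at this
  norm_num at this
end

section
/- Fine's theorem (existence direction): if p = (w,x,y,z) ∈ [-1,1]⁴ satisfies all eight CHSH inequalities (each of -w+x+y+z, w-x+y+z, w+x-y+z, w+x+y-z lies in [-2,2]), then there exists a probability mass function ρ on {-1,1}⁴ (i.e., on quadruples (A₁,A₂,B₁,B₂) of ±1 values) such that E[A₁B₁] = w, E[A₁B₂] = x, E[A₂B₁] = y, E[A₂B₂] = z, where expectations are taken with respect to ρ. -/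
/-- Sign value of a hidden variable index: `0 ↦ -1`, `1 ↦ +1`. -/
noncomputable def sgn (i : Fin 2) : ℝ := if i = 0 then -1 else 1

lemma sgn_eval : sgn 0 = -1 ∧ sgn 1 = 1 := by constructor <;> simp [sgn]

lemma sgn_cases (i : Fin 2) : sgn i = -1 ∨ sgn i = 1 := by
  unfold sgn; split <;> simp

lemma sum_expand (g : (Fin 4 → Fin 2) → ℝ) : ∑ f, g f =
    ∑ a : Fin 2, ∑ b : Fin 2, ∑ c : Fin 2, ∑ d : Fin 2, g ![a,b,c,d] := by
  rw [← Fintype.sum_equiv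
    (⟨fun p => ![p.1, p.2.1, p.2.2.1, p.2.2.2], fun f => (f 0, f 1, f 2, f 3),
      by decide, by decide⟩ : (Fin 2 × Fin 2 × Fin 2 × Fin 2) ≃ (Fin 4 → Fin 2))
    (fun p => g ![p.1, p.2.1, p.2.2.1, p.2.2.2]) g (fun p => rfl)]
  simp [Fintype.sum_prod_type]

theorem fine_theorem_existence
    (w x y z : ℝ)
    (hw : w ∈ Set.Icc (-1 : ℝ) 1) (hx : x ∈ Set.Icc (-1 : ℝ) 1)
    (hy : y ∈ Set.Icc (-1 : ℝ) 1) (hz : z ∈ Set.Icc (-1 : ℝ) 1)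
    (h1 : -w + x + y + z ∈ Set.Icc (-2 : ℝ) 2)
    (h2 : w - x + y + z ∈ Set.Icc (-2 : ℝ) 2)
    (h3 : w + x - y + z ∈ Set.Icc (-2 : ℝ) 2)
    (h4 : w + x + y - z ∈ Set.Icc (-2 : ℝ) 2) :
    ∃ ρ : (Fin 4 → Fin 2) → ℝ,
      (∀ f, 0 ≤ ρ f) ∧ (∑ f, ρ f = 1) ∧
      (∑ f, ρ f * (sgn (f 0) * sgn (f 2)) = w) ∧
      (∑ f, ρ f * (sgn (f 0) * sgn (f 3)) = x) ∧
      (∑ f, ρ f * (sgn (f 1) * sgn (f 2)) = y) ∧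
      (∑ f, ρ f * (sgn (f 1) * sgn (f 3)) = z) := by
  obtain ⟨hw1, hw2⟩ := hw
  obtain ⟨hx1, hx2⟩ := hx
  obtain ⟨hy1, hy2⟩ := hy
  obtain ⟨hz1, hz2⟩ := hz
  obtain ⟨h11, h12⟩ := h1
  obtain ⟨h21, h22⟩ := h2
  obtain ⟨h31, h32⟩ := h3
  obtain ⟨h41, h42⟩ := h4
  set A : ℝ := |w+x+y+z| with hA
  set B : ℝ := |w+x-y-z| with hB
  set P : ℝ := |w-x+y-z| with hP
  set Q : ℝ := |w-x-y+z| with hQ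
  have hS : A + B + P + Q ≤ 4 := by
    rw [hA, hB, hP, hQ]
    rcases abs_cases (w+x+y+z) with ⟨q1,_⟩|⟨q1,_⟩ <;>
    rcases abs_cases (w+x-y-z) with ⟨q2,_⟩|⟨q2,_⟩ <;>
    rcases abs_cases (w-x+y-z) with ⟨q3,_⟩|⟨q3,_⟩ <;>
    rcases abs_cases (w-x-y+z) with ⟨q4,_⟩|⟨q4,_⟩ <;>
    linarith
  have eA1 : w+x+y+z ≤ A := le_abs_self _
  have eA2 : -(w+x+y+z) ≤ A := neg_le_of_neg_le (neg_abs_le _)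
  have eB1 : w+x-y-z ≤ B := le_abs_self _
  have eB2 : -(w+x-y-z) ≤ B := neg_le_of_neg_le (neg_abs_le _)
  have eP1 : w-x+y-z ≤ P := le_abs_self _
  have eP2 : -(w-x+y-z) ≤ P := neg_le_of_neg_le (neg_abs_le _)
  have eQ1 : w-x-y+z ≤ Q := le_abs_self _
  have eQ2 : -(w-x-y+z) ≤ Q := neg_le_of_neg_le (neg_abs_le _)
  refine ⟨fun f => (1/16) * (1 + w * (sgn (f 0) * sgn (f 2)) + x * (sgn (f 0) * sgn (f 3))
      + y * (sgn (f 1) * sgn (f 2)) + z * (sgn (f 1) * sgn (f 3))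
      + ((A + P - B - Q)/4) * (sgn (f 0) * sgn (f 1))
      + ((A + B - P - Q)/4) * (sgn (f 2) * sgn (f 3))
      + ((A + Q - B - P)/4) * (sgn (f 0) * sgn (f 1) * sgn (f 2) * sgn (f 3))),
    ?_, ?_, ?_, ?_, ?_, ?_⟩
  · intro f
    dsimp only
    rcases sgn_cases (f 0) with s0|s0 <;>
    rcases sgn_cases (f 1) with s1|s1 <;>
    rcases sgn_cases (f 2) with s2|s2 <;>
    rcases sgn_cases (f 3) with s3|s3 <;>
    rw [s0, s1, s2, s3] <;> norm_num <;> linarith [hS, eA1, eA2, eB1, eB2, eP1, eP2, eQ1, eQ2]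
  all_goals
    rw [sum_expand]
    simp only [Fin.sum_univ_two, Matrix.cons_val_zero, Matrix.cons_val_one, Matrix.head_cons,
      Matrix.cons_val_two, Matrix.cons_val_three, Matrix.tail_cons, sgn_eval.1, sgn_eval.2]
    ring
end

section
/- Converse of Fine's theorem: if ρ is any probability mass function on {-1,1}⁴ (quadruples (A₁,A₂,B₁,B₂) of ±1 values), then the correlation vector (E[A₁B₁], E[A₁B₂], E[A₂B₁], E[A₂B₂]) satisfies all eight CHSH inequalities: each of -w+x+y+z, w-x+y+z, w+x-y+z, w+x+y-z lies in [-2,2]. -/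
/-!
For values in `[-1, 1]`, `A₁B₁ + A₁B₂ + A₂B₁ - A₂B₂ = A₁(B₁ + B₂) + A₂(B₁ - B₂)` is bounded in absolute
value by `|B₁ + B₂| + |B₁ - B₂| = 2 max(|B₁|, |B₂|) ≤ 2`. Averaging against `ρ` preserves this bound, and
the four CHSH combinations are this expression with the roles of the observables permuted.
-/

lemma abs_sgn_le_one (i : Fin 2) : |sgn i| ≤ 1 := by
  unfold sgn; split <;> simp

lemma abs_chsh_le_two {a a' b b' : ℝ} (ha : |a| ≤ 1) (ha' : |a'| ≤ 1) (hb : |b| ≤ 1)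
    (hb' : |b'| ≤ 1) : |a * b + a * b' + a' * b - a' * b'| ≤ 2 := by
  calc |a * b + a * b' + a' * b - a' * b'| = |a * (b + b') + a' * (b - b')| := by ring_nf
    _ ≤ |a| * |b + b'| + |a'| * |b - b'| := by
        simpa only [abs_mul] using abs_add_le (a * (b + b')) (a' * (b - b'))
    _ ≤ |b + b'| + |b - b'| := by
        gcongr
        · exact mul_le_of_le_one_left (abs_nonneg _) ha
        · exact mul_le_of_le_one_left (abs_nonneg _) ha'
    _ ≤ 2 := by
        rw [abs_le] at hb hb'
        rcases abs_cases (b + b') with ⟨h, -⟩ | ⟨h, -⟩ <;>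
          rcases abs_cases (b - b') with ⟨h', -⟩ | ⟨h', -⟩ <;> linarith

section Expectation

variable {α : Type*} [Fintype α] {ρ : α → ℝ}

lemma abs_expectation_le (hnn : ∀ f, 0 ≤ ρ f) (hsum : ∑ f, ρ f = 1) {c : α → ℝ} {M : ℝ}
    (hc : ∀ f, |c f| ≤ M) : |∑ f, ρ f * c f| ≤ M :=
  calc |∑ f, ρ f * c f| ≤ ∑ f, |ρ f * c f| := Finset.abs_sum_le_sum_abs _ _
    _ = ∑ f, ρ f * |c f| := by simp only [abs_mul, abs_of_nonneg (hnn _)]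
    _ ≤ ∑ f, ρ f * M := Finset.sum_le_sum fun f _ => mul_le_mul_of_nonneg_left (hc f) (hnn f)
    _ = M := by rw [← Finset.sum_mul, hsum, one_mul]

lemma abs_expectation_chsh_le_two (hnn : ∀ f, 0 ≤ ρ f) (hsum : ∑ f, ρ f = 1)
    {a a' b b' : α → ℝ} (ha : ∀ f, |a f| ≤ 1) (ha' : ∀ f, |a' f| ≤ 1) (hb : ∀ f, |b f| ≤ 1)
    (hb' : ∀ f, |b' f| ≤ 1) :
    |∑ f, ρ f * (a f * b f) + ∑ f, ρ f * (a f * b' f) + ∑ f, ρ f * (a' f * b f)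
      - ∑ f, ρ f * (a' f * b' f)| ≤ 2 := by
  calc _ = |∑ f, ρ f * (a f * b f + a f * b' f + a' f * b f - a' f * b' f)| := by
        simp only [mul_add, mul_sub, Finset.sum_add_distrib, Finset.sum_sub_distrib]
    _ ≤ 2 := abs_expectation_le hnn hsum fun f => abs_chsh_le_two (ha f) (ha' f) (hb f) (hb' f)

end Expectation

theorem fine_theorem_converse
    (ρ : (Fin 4 → Fin 2) → ℝ)
    (hnn : ∀ f, 0 ≤ ρ f) (hsum : ∑ f, ρ f = 1)
    (w x y z : ℝ)
    (hw : ∑ f, ρ f * (sgn (f 0) * sgn (f 2)) = w)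
    (hx : ∑ f, ρ f * (sgn (f 0) * sgn (f 3)) = x)
    (hy : ∑ f, ρ f * (sgn (f 1) * sgn (f 2)) = y)
    (hz : ∑ f, ρ f * (sgn (f 1) * sgn (f 3)) = z) :
    -w + x + y + z ∈ Set.Icc (-2 : ℝ) 2 ∧
    w - x + y + z ∈ Set.Icc (-2 : ℝ) 2 ∧
    w + x - y + z ∈ Set.Icc (-2 : ℝ) 2 ∧
    w + x + y - z ∈ Set.Icc (-2 : ℝ) 2 := by
  subst hw hx hy hz
  have chsh (i i' j j' : Fin 4) := abs_le.mp <| abs_expectation_chsh_le_two hnn hsum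
    (a := fun f => sgn (f i)) (a' := fun f => sgn (f i')) (b := fun f => sgn (f j))
    (b' := fun f => sgn (f j')) (fun _ => abs_sgn_le_one _) (fun _ => abs_sgn_le_one _)
    (fun _ => abs_sgn_le_one _) (fun _ => abs_sgn_le_one _)
  obtain ⟨h₁, h₁'⟩ := chsh 1 0 3 2
  obtain ⟨h₂, h₂'⟩ := chsh 1 0 2 3
  obtain ⟨h₃, h₃'⟩ := chsh 0 1 3 2
  obtain ⟨h₄, h₄'⟩ := chsh 0 1 2 3
  refine ⟨⟨?_, ?_⟩, ⟨?_, ?_⟩, ⟨?_, ?_⟩, ⟨?_, ?_⟩⟩ <;> linarith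
end

section
/- There is no probability mass function ρ = (ρ₁,...,ρ₁₆) such that ρ₁+ρ₂+ρ₅+ρ₆ = 1, ρ₁+ρ₃+ρ₅+ρ₇ = 1, ρ₁+ρ₂+ρ₉+ρ₁₀ = 1, ρ₆+ρ₈+ρ₁₄+ρ₁₆ = 1, and all twelve remaining sums of four ρ's appearing as Bell real conditional probabilities equal 0. Hence the deterministic generic instance γ = (1,1,1,0,0,0,0,0,0,0,0,0,0,0,0,1), which satisfies all eight CHSH inequalities, is not Bell real. -/
/-- The deterministic generic instance γ = (1,1,1,0,…,0,1) satisfies all eight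
CHSH inequalities (its correlations are (1,1,1,1)), yet no Bell real pmf ρ
realizes its conditional probabilities. -/
theorem chsh_does_not_imply_bell_real :
    (|(-1 : ℝ) + 1 + 1 + 1| ≤ 2 ∧ |(1 : ℝ) - 1 + 1 + 1| ≤ 2 ∧
     |(1 : ℝ) + 1 - 1 + 1| ≤ 2 ∧ |(1 : ℝ) + 1 + 1 - 1| ≤ 2) ∧
    ¬ ∃ ρ : Fin 16 → ℝ,
      (∀ i, 0 ≤ ρ i) ∧ (∑ i, ρ i = 1) ∧
      ρ 0 + ρ 1 + ρ 4 + ρ 5 = 1 ∧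
      ρ 0 + ρ 2 + ρ 4 + ρ 6 = 1 ∧
      ρ 0 + ρ 1 + ρ 8 + ρ 9 = 1 ∧
      ρ 0 + ρ 2 + ρ 8 + ρ 10 = 0 ∧
      ρ 2 + ρ 3 + ρ 6 + ρ 7 = 0 ∧
      ρ 1 + ρ 3 + ρ 5 + ρ 7 = 0 ∧
      ρ 2 + ρ 3 + ρ 10 + ρ 11 = 0 ∧
      ρ 1 + ρ 3 + ρ 9 + ρ 11 = 0 ∧
      ρ 8 + ρ 9 + ρ 12 + ρ 13 = 0 ∧
      ρ 8 + ρ 10 + ρ 12 + ρ 14 = 0 ∧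
      ρ 4 + ρ 5 + ρ 12 + ρ 13 = 0 ∧
      ρ 4 + ρ 6 + ρ 12 + ρ 14 = 0 ∧
      ρ 10 + ρ 11 + ρ 14 + ρ 15 = 0 ∧
      ρ 9 + ρ 11 + ρ 13 + ρ 15 = 0 ∧
      ρ 6 + ρ 7 + ρ 14 + ρ 15 = 0 ∧
      ρ 5 + ρ 7 + ρ 13 + ρ 15 = 1 := by
  constructor
  · norm_num
  · rintro ⟨ρ, hpos, -, -, -, -, -, -, h6, -, -, -, -, -, -, -, h14, -, h16⟩
    have := hpos 1; have := hpos 3; have := hpos 5; have := hpos 7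
    have := hpos 9; have := hpos 11; have := hpos 13; have := hpos 15
    linarith
end

section
/- Local causality is equivalent to the conjunction of remote context independence and remote outcome independence: for random variables A, B, D_A, D_B each valued in {-1,1}, with all appearing conditional probabilities well-defined, the conditions P(A=s | B=t, D_A=u, D_B=v) = P(A=s | D_A=u) and P(B=t | A=s, D_A=u, D_B=v) = P(B=t | D_B=v) for all s,t,u,v hold if and only if both (i) P(A=s | D_A=u, D_B=v) = P(A=s | D_A=u) and P(B=t | D_A=u, D_B=v) = P(B=t | D_B=v) for all s,t,u,v, and (ii) A and B are conditionally independent given (D_A, D_B). -/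
open Classical in
/-- Probability of an event under a pmf on a finite sample space. -/
noncomputable def prEvent {Ω : Type*} [Fintype Ω] (p : Ω → ℝ) (E : Ω → Prop) : ℝ :=
  ∑ ω, if E ω then p ω else 0

/-- Conditional probability `P(E | F)`. -/
noncomputable def condPr {Ω : Type*} [Fintype Ω] (p : Ω → ℝ) (E F : Ω → Prop) : ℝ :=
  prEvent p (fun ω => E ω ∧ F ω) / prEvent p F

lemma prEvent_congr {Ω : Type*} [Fintype Ω] (p : Ω → ℝ) {E F : Ω → Prop}
    (h : ∀ ω, E ω ↔ F ω) : prEvent p E = prEvent p F := by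
  unfold prEvent
  exact Finset.sum_congr rfl fun ω _ => by rw [show E ω = F ω from propext (h ω)]

lemma prEvent_split {Ω : Type*} [Fintype Ω] (p : Ω → ℝ) (E : Ω → Prop) (X : Ω → ℝ)
    (hX : ∀ ω, X ω = -1 ∨ X ω = 1) :
    prEvent p E = prEvent p (fun ω => E ω ∧ X ω = -1) + prEvent p (fun ω => E ω ∧ X ω = 1) := by
  unfold prEvent
  rw [← Finset.sum_add_distrib]
  refine Finset.sum_congr rfl fun ω _ => ?_
  rcases hX ω with h | h <;> by_cases hE : E ω <;> simp [h, hE] <;> norm_num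

lemma condPr_eq_iff {Ω : Type*} [Fintype Ω] (p : Ω → ℝ) (E F : Ω → Prop) (x : ℝ)
    (hF : prEvent p F ≠ 0) :
    condPr p E F = x ↔ prEvent p (fun ω => E ω ∧ F ω) = x * prEvent p F := by
  rw [condPr, div_eq_iff hF]

/-- Local causality (LC) is equivalent to the conjunction of remote context
independence (RCI) and remote outcome independence (ROI). -/
theorem local_causality_iff_rci_and_roi
    {Ω : Type*} [Fintype Ω] (p : Ω → ℝ)
    (hnn : ∀ ω, 0 ≤ p ω) (hsum : ∑ ω, p ω = 1)
    (A B DA DB : Ω → ℝ)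
    (hA : ∀ ω, A ω = -1 ∨ A ω = 1) (hB : ∀ ω, B ω = -1 ∨ B ω = 1)
    (hDA : ∀ ω, DA ω = -1 ∨ DA ω = 1) (hDB : ∀ ω, DB ω = -1 ∨ DB ω = 1)
    (hposD : ∀ u v : ℝ, (u = -1 ∨ u = 1) → (v = -1 ∨ v = 1) →
      0 < prEvent p (fun ω => DA ω = u ∧ DB ω = v))
    (hposA : ∀ s u v : ℝ, (s = -1 ∨ s = 1) → (u = -1 ∨ u = 1) → (v = -1 ∨ v = 1) →
      0 < prEvent p (fun ω => A ω = s ∧ DA ω = u ∧ DB ω = v))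
    (hposB : ∀ t u v : ℝ, (t = -1 ∨ t = 1) → (u = -1 ∨ u = 1) → (v = -1 ∨ v = 1) →
      0 < prEvent p (fun ω => B ω = t ∧ DA ω = u ∧ DB ω = v)) :
    -- LC
    (∀ s t u v : ℝ, (s = -1 ∨ s = 1) → (t = -1 ∨ t = 1) →
        (u = -1 ∨ u = 1) → (v = -1 ∨ v = 1) →
      condPr p (fun ω => A ω = s) (fun ω => B ω = t ∧ DA ω = u ∧ DB ω = v) =
        condPr p (fun ω => A ω = s) (fun ω => DA ω = u) ∧
      condPr p (fun ω => B ω = t) (fun ω => A ω = s ∧ DA ω = u ∧ DB ω = v) =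
        condPr p (fun ω => B ω = t) (fun ω => DB ω = v))
    ↔
    -- RCI
    ((∀ s t u v : ℝ, (s = -1 ∨ s = 1) → (t = -1 ∨ t = 1) →
        (u = -1 ∨ u = 1) → (v = -1 ∨ v = 1) →
      condPr p (fun ω => A ω = s) (fun ω => DA ω = u ∧ DB ω = v) =
        condPr p (fun ω => A ω = s) (fun ω => DA ω = u) ∧
      condPr p (fun ω => B ω = t) (fun ω => DA ω = u ∧ DB ω = v) =
        condPr p (fun ω => B ω = t) (fun ω => DB ω = v)) ∧
    -- ROI: conditional independence of A and B given (DA, DB)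
     (∀ s t u v : ℝ, (s = -1 ∨ s = 1) → (t = -1 ∨ t = 1) →
        (u = -1 ∨ u = 1) → (v = -1 ∨ v = 1) →
      condPr p (fun ω => A ω = s ∧ B ω = t) (fun ω => DA ω = u ∧ DB ω = v) =
        condPr p (fun ω => A ω = s) (fun ω => DA ω = u ∧ DB ω = v) *
        condPr p (fun ω => B ω = t) (fun ω => DA ω = u ∧ DB ω = v))) := by
  constructor
  · intro lc
    -- key facts: pAB = a * pB and pAB = b * pA
    have keyA : ∀ s t u v : ℝ, (s = -1 ∨ s = 1) → (t = -1 ∨ t = 1) →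
        (u = -1 ∨ u = 1) → (v = -1 ∨ v = 1) →
        prEvent p (fun ω => A ω = s ∧ B ω = t ∧ DA ω = u ∧ DB ω = v) =
          condPr p (fun ω => A ω = s) (fun ω => DA ω = u) *
          prEvent p (fun ω => B ω = t ∧ DA ω = u ∧ DB ω = v) :=
      fun s t u v hs ht hu hv =>
        (condPr_eq_iff p _ _ _ (hposB t u v ht hu hv).ne').mp (lc s t u v hs ht hu hv).1
    have keyB : ∀ s t u v : ℝ, (s = -1 ∨ s = 1) → (t = -1 ∨ t = 1) →
        (u = -1 ∨ u = 1) → (v = -1 ∨ v = 1) →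
        prEvent p (fun ω => A ω = s ∧ B ω = t ∧ DA ω = u ∧ DB ω = v) =
          condPr p (fun ω => B ω = t) (fun ω => DB ω = v) *
          prEvent p (fun ω => A ω = s ∧ DA ω = u ∧ DB ω = v) := by
      intro s t u v hs ht hu hv
      have h := (condPr_eq_iff p _ _ _ (hposA s u v hs hu hv).ne').mp
        (lc s t u v hs ht hu hv).2
      rw [← h]
      exact prEvent_congr p fun ω => by tauto
    have rciA : ∀ s u v : ℝ, (s = -1 ∨ s = 1) → (u = -1 ∨ u = 1) → (v = -1 ∨ v = 1) →
        prEvent p (fun ω => A ω = s ∧ DA ω = u ∧ DB ω = v) =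
          condPr p (fun ω => A ω = s) (fun ω => DA ω = u) *
          prEvent p (fun ω => DA ω = u ∧ DB ω = v) := by
      intro s u v hs hu hv
      have hsplit : prEvent p (fun ω => A ω = s ∧ DA ω = u ∧ DB ω = v)
          = prEvent p (fun ω => A ω = s ∧ B ω = -1 ∧ DA ω = u ∧ DB ω = v)
          + prEvent p (fun ω => A ω = s ∧ B ω = 1 ∧ DA ω = u ∧ DB ω = v) := by
        rw [prEvent_split p _ B hB]
        congr 1 <;> exact prEvent_congr p fun ω => by tauto
      have hsplitD : prEvent p (fun ω => DA ω = u ∧ DB ω = v)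
          = prEvent p (fun ω => B ω = -1 ∧ DA ω = u ∧ DB ω = v)
          + prEvent p (fun ω => B ω = 1 ∧ DA ω = u ∧ DB ω = v) := by
        rw [prEvent_split p _ B hB]
        congr 1 <;> exact prEvent_congr p fun ω => by tauto
      rw [hsplit, keyA s (-1) u v hs (Or.inl rfl) hu hv,
        keyA s 1 u v hs (Or.inr rfl) hu hv, hsplitD]
      ring
    have rciB : ∀ t u v : ℝ, (t = -1 ∨ t = 1) → (u = -1 ∨ u = 1) → (v = -1 ∨ v = 1) →
        prEvent p (fun ω => B ω = t ∧ DA ω = u ∧ DB ω = v) =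
          condPr p (fun ω => B ω = t) (fun ω => DB ω = v) *
          prEvent p (fun ω => DA ω = u ∧ DB ω = v) := by
      intro t u v ht hu hv
      have hsplit : prEvent p (fun ω => B ω = t ∧ DA ω = u ∧ DB ω = v)
          = prEvent p (fun ω => A ω = -1 ∧ B ω = t ∧ DA ω = u ∧ DB ω = v)
          + prEvent p (fun ω => A ω = 1 ∧ B ω = t ∧ DA ω = u ∧ DB ω = v) := by
        rw [prEvent_split p _ A hA]
        congr 1 <;> exact prEvent_congr p fun ω => by tauto
      have hsplitD : prEvent p (fun ω => DA ω = u ∧ DB ω = v)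
          = prEvent p (fun ω => A ω = -1 ∧ DA ω = u ∧ DB ω = v)
          + prEvent p (fun ω => A ω = 1 ∧ DA ω = u ∧ DB ω = v) := by
        rw [prEvent_split p _ A hA]
        congr 1 <;> exact prEvent_congr p fun ω => by tauto
      rw [hsplit, keyB (-1) t u v (Or.inl rfl) ht hu hv,
        keyB 1 t u v (Or.inr rfl) ht hu hv, hsplitD]
      ring
    refine ⟨fun s t u v hs ht hu hv => ?_, fun s t u v hs ht hu hv => ?_⟩
    · have hpD := (hposD u v hu hv).ne'
      exact ⟨(condPr_eq_iff p _ _ _ hpD).mpr (rciA s u v hs hu hv),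
        (condPr_eq_iff p _ _ _ hpD).mpr (rciB t u v ht hu hv)⟩
    · have hpD := hposD u v hu hv
      have h1 := keyA s t u v hs ht hu hv
      have h2 := rciA s u v hs hu hv
      have hc : prEvent p (fun ω => (A ω = s ∧ B ω = t) ∧ DA ω = u ∧ DB ω = v)
          = prEvent p (fun ω => A ω = s ∧ B ω = t ∧ DA ω = u ∧ DB ω = v) :=
        prEvent_congr p fun ω => by tauto
      unfold condPr
      rw [hc, h1, h2]
      field_simp
  · rintro ⟨rci, roi⟩ s t u v hs ht hu hv
    have hpD := hposD u v hu hv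
    have hpAA := (hposA s u v hs hu hv).ne'
    have hpB := (hposB t u v ht hu hv).ne'
    have hc : prEvent p (fun ω => (A ω = s ∧ B ω = t) ∧ DA ω = u ∧ DB ω = v)
        = prEvent p (fun ω => A ω = s ∧ B ω = t ∧ DA ω = u ∧ DB ω = v) :=
      prEvent_congr p fun ω => by tauto
    have hAB := (condPr_eq_iff p _ _ _ hpD.ne').mp (roi s t u v hs ht hu hv)
    rw [hc] at hAB
    -- pA = rA * pD, pB = rB * pD
    have hA' : prEvent p (fun ω => A ω = s ∧ DA ω = u ∧ DB ω = v) =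
        condPr p (fun ω => A ω = s) (fun ω => DA ω = u ∧ DB ω = v) *
        prEvent p (fun ω => DA ω = u ∧ DB ω = v) :=
      (condPr_eq_iff p _ _ _ hpD.ne').mp rfl
    have hB' : prEvent p (fun ω => B ω = t ∧ DA ω = u ∧ DB ω = v) =
        condPr p (fun ω => B ω = t) (fun ω => DA ω = u ∧ DB ω = v) *
        prEvent p (fun ω => DA ω = u ∧ DB ω = v) :=
      (condPr_eq_iff p _ _ _ hpD.ne').mp rfl
    constructor
    · refine (condPr_eq_iff p _ _ _ hpB).mpr ?_
      rw [← (rci s t u v hs ht hu hv).1, hAB, hB']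
      ring
    · refine (condPr_eq_iff p _ _ _ hpAA).mpr ?_
      have hc2 : prEvent p (fun ω => B ω = t ∧ A ω = s ∧ DA ω = u ∧ DB ω = v)
          = prEvent p (fun ω => A ω = s ∧ B ω = t ∧ DA ω = u ∧ DB ω = v) :=
        prEvent_congr p fun ω => by tauto
      rw [hc2, ← (rci s t u v hs ht hu hv).2, hAB, hA']
      ring
end
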